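/- arXiv:1707.01141 — 3 statements merged into one kernel-verified Lean document; each statement's English description precedes it below -/
import Mathlib

section
/- Fix w∈A_∞(ℬ). If there exist 0<q₀<p₀<∞ with q₀≤1 such that X_w(ℬ,Λ) satisfies the p-power John-Nirenberg property on the interval [q₀,p₀], then X_w(ℬ,Λ) also satisfies the p-power John-Nirenberg property on the interval (0,p₀]. -/
open MeasureTheory ENNReal Set

noncomputable section

namespace JNW

variable {Y : Type*} [MeasurableSpace Y] {F : Type*}

/-- The Hölder conjugate exponent `p' = p/(p-1)`. -/
def conj (p : ℝ) : ℝ := p / (p - 1)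

/-- The average `(1/μ(B)) ∫_B g dμ` of an `ℝ≥0∞`-valued function over a set. -/
def lavg (μ : Measure Y) (B : Set Y) (g : Y → ℝ≥0∞) : ℝ≥0∞ :=
  (∫⁻ x in B, g x ∂μ) / μ B

/-- The Muckenhoupt `A_p` characteristic of a weight `w` relative to the basis `ℬ`:
`[w]_{A_p} = sup_{B ∈ ℬ} ((1/μ(B))∫_B w dμ) ((1/μ(B))∫_B w^{-p'/p} dμ)^{p/p'}`. -/
def apConst (μ : Measure Y) (ℬ : Set (Set Y)) (p : ℝ) (w : Y → ℝ≥0∞) : ℝ≥0∞ :=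
  ⨆ B ∈ ℬ, lavg μ B w * (lavg μ B fun x => w x ^ (-(conj p / p))) ^ (p / conj p)

/-- Membership in the Muckenhoupt class `A_p(ℬ)`: a nonnegative, locally `μ`-integrable
(measurable) function with finite `A_p` characteristic. -/
def MemAp (μ : Measure Y) (ℬ : Set (Set Y)) (p : ℝ) (w : Y → ℝ≥0∞) : Prop :=
  Measurable w ∧ (∀ B ∈ ℬ, ∫⁻ x in B, w x ∂μ < ⊤) ∧ apConst μ ℬ p w < ⊤

/-- `A_∞(ℬ)` is the union of the classes `A_p(ℬ)` over `1 < p < ∞`. -/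
def MemAinfty (μ : Measure Y) (ℬ : Set (Set Y)) (w : Y → ℝ≥0∞) : Prop :=
  ∃ p : ℝ, 1 < p ∧ MemAp μ ℬ p w

/-- The reverse Hölder characteristic `[w]_{RH_δ}`: the least constant `C` with
`((1/μ(B))∫_B w^δ dμ)^{1/δ} ≤ C (1/μ(B))∫_B w dμ` for all `B ∈ ℬ`. -/
def rhConst (μ : Measure Y) (ℬ : Set (Set Y)) (δ : ℝ) (w : Y → ℝ≥0∞) : ℝ≥0∞ :=
  ⨆ B ∈ ℬ, (lavg μ B fun x => w x ^ δ) ^ (1 / δ) / lavg μ B w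

/-- Membership in the reverse Hölder class `RH_δ(ℬ)`. -/
def MemRH (μ : Measure Y) (ℬ : Set (Set Y)) (δ : ℝ) (w : Y → ℝ≥0∞) : Prop :=
  Measurable w ∧ (∀ B ∈ ℬ, ∫⁻ x in B, w x ∂μ < ⊤) ∧ rhConst μ ℬ δ w < ⊤

/-- The weight identically equal to one. -/
def wone : Y → ℝ≥0∞ := fun _ => 1

/-- `‖f‖_{X_w^p} = (sup_{B∈ℬ} (1/w(B)) ∫_B Λ(f,B)(x)^p w(x) dμ(x))^(1/p)`. -/
def xNorm (μ : Measure Y) (ℬ : Set (Set Y)) (Λ : F → Set Y → Y → ℝ≥0∞)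
    (w : Y → ℝ≥0∞) (p : ℝ) (f : F) : ℝ≥0∞ :=
  (⨆ B ∈ ℬ, (∫⁻ x in B, Λ f B x ^ p * w x ∂μ) / ∫⁻ x in B, w x ∂μ) ^ (1 / p)

/-- The `p`-power John–Nirenberg property of `X_w(ℬ,Λ)` on an interval `I ⊆ (0,∞)`:
for all `p < q` in `I` there is a finite constant `C` with `‖f‖_{X_w^q} ≤ C ‖f‖_{X_w^p}`
for every `f ∈ X_w(ℬ,Λ)`. -/
def JNprop (μ : Measure Y) (ℬ : Set (Set Y)) (Λ : F → Set Y → Y → ℝ≥0∞)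
    (w : Y → ℝ≥0∞) (I : Set ℝ) : Prop :=
  ∀ p ∈ I, ∀ q ∈ I, p < q → ∃ C : ℝ≥0∞, C < ⊤ ∧
    ∀ f : F, xNorm μ ℬ Λ w 1 f < ⊤ → xNorm μ ℬ Λ w q f ≤ C * xNorm μ ℬ Λ w p f

/-- `c_{p,q}(w)`: the least constant `C` with `‖f‖_{X_w^q} ≤ C ‖f‖_{X_w^p}` for all
`f ∈ X_w(ℬ,Λ)`. -/
def cConst (μ : Measure Y) (ℬ : Set (Set Y)) (Λ : F → Set Y → Y → ℝ≥0∞)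
    (w : Y → ℝ≥0∞) (p q : ℝ) : ℝ≥0∞ :=
  sInf {C : ℝ≥0∞ |
    ∀ f : F, xNorm μ ℬ Λ w 1 f < ⊤ → xNorm μ ℬ Λ w q f ≤ C * xNorm μ ℬ Λ w p f}

/-- `b_{w,v}`: the least constant `C` with `‖f‖_{X_v} ≤ C ‖f‖_{X_w}` for all
`f ∈ X_w(ℬ,Λ)`. -/
def bConst (μ : Measure Y) (ℬ : Set (Set Y)) (Λ : F → Set Y → Y → ℝ≥0∞)
    (w v : Y → ℝ≥0∞) : ℝ≥0∞ :=
  sInf {C : ℝ≥0∞ |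
    ∀ f : F, xNorm μ ℬ Λ w 1 f < ⊤ → xNorm μ ℬ Λ v 1 f ≤ C * xNorm μ ℬ Λ w 1 f}

/-- The weight invariance property of `X(ℬ,Λ)` for a class `𝒲` of weights:
`X_w(ℬ,Λ) = X_v(ℬ,Λ)` as sets for all `w, v ∈ 𝒲`, with a finite comparison constant. -/
def WeightInv (μ : Measure Y) (ℬ : Set (Set Y)) (Λ : F → Set Y → Y → ℝ≥0∞)
    (𝒲 : Set (Y → ℝ≥0∞)) : Prop :=
  ∀ w ∈ 𝒲, ∀ v ∈ 𝒲,
    ({f : F | xNorm μ ℬ Λ w 1 f < ⊤} = {f : F | xNorm μ ℬ Λ v 1 f < ⊤}) ∧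
    ∃ C : ℝ≥0∞, C < ⊤ ∧
      ∀ f : F, xNorm μ ℬ Λ w 1 f < ⊤ → xNorm μ ℬ Λ v 1 f ≤ C * xNorm μ ℬ Λ w 1 f

/-- `Ψ_p(t) = sup { b_{1,v} : v ∈ A_p(ℬ), [v]_{A_p} ≤ t }`. -/
def psi (μ : Measure Y) (ℬ : Set (Set Y)) (Λ : F → Set Y → Y → ℝ≥0∞)
    (p : ℝ) (t : ℝ≥0∞) : ℝ≥0∞ :=
  ⨆ (v : Y → ℝ≥0∞) (_ : MemAp μ ℬ p v ∧ apConst μ ℬ p v ≤ t),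
    bConst μ ℬ Λ wone v

end JNW

/-!
Fix `f` and put `N r = ‖f‖_{X_w^r}^r`. On each `B ∈ ℬ`, `r ↦ (1/w(B)) ∫_B Λ(f,B)^r w dμ` is
log-convex on `[0, ∞)` by Hölder's inequality for the measure `w dμ / w(B)`, and a supremum of
log-convex functions is log-convex; moreover `N 0 ≤ 1`. Hence `r ↦ N r ^ (1/r) = ‖f‖_{X_w^r}` is
nondecreasing. For `p < q₀`, interpolating `q₀` between `p` and `p₀` and using
`‖f‖_{X_w^{p₀}} ≤ c ‖f‖_{X_w^{q₀}}` bounds `N q₀` by `N p ^ θ` times a power of `c ‖f‖_{X_w^{q₀}}`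
of exponent smaller than `q₀`. Since `q₀ ≤ 1`, monotonicity gives
`‖f‖_{X_w^{q₀}} ≤ ‖f‖_{X_w} < ∞`, so that power can be absorbed: `‖f‖_{X_w^{q₀}} ≲ ‖f‖_{X_w^p}`.
Then `‖f‖_{X_w^q} ≤ ‖f‖_{X_w^{p₀}} ≤ c ‖f‖_{X_w^{q₀}} ≲ ‖f‖_{X_w^p}` for all `q ≤ p₀`.
-/

namespace JNW

def LogConvexOn (s : Set ℝ) (N : ℝ → ℝ≥0∞) : Prop :=
  ∀ ⦃a⦄, a ∈ s → ∀ ⦃b⦄, b ∈ s → ∀ ⦃θ : ℝ⦄, 0 ≤ θ → θ ≤ 1 →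
    N (θ * a + (1 - θ) * b) ≤ N a ^ θ * N b ^ (1 - θ)

namespace LogConvexOn

variable {s : Set ℝ} {N : ℝ → ℝ≥0∞}

protected theorem iSup {ι : Sort*} {M : ι → ℝ → ℝ≥0∞} (h : ∀ i, LogConvexOn s (M i)) :
    LogConvexOn s fun r => ⨆ i, M i r := by
  intro a ha b hb θ hθ hθ1
  refine iSup_le fun i => (h i ha hb hθ hθ1).trans ?_
  exact mul_le_mul' (rpow_le_rpow (le_iSup (fun i => M i a) i) hθ)
    (rpow_le_rpow (le_iSup (fun i => M i b) i) (sub_nonneg.2 hθ1))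

theorem rpow_one_div_le (hN : LogConvexOn (Ici 0) N) (h0 : N 0 ≤ 1) {q r : ℝ} (hq : 0 < q)
    (hqr : q ≤ r) : N q ^ (1 / q) ≤ N r ^ (1 / r) := by
  have hr : 0 < r := hq.trans_le hqr
  have hq_div : q / r ≤ 1 := (div_le_one hr).2 hqr
  have hNq : N q ≤ N r ^ (q / r) :=
    calc N q = N (q / r * r + (1 - q / r) * 0) := by
          rw [mul_zero, add_zero, div_mul_cancel₀ q hr.ne']
      _ ≤ N r ^ (q / r) * N 0 ^ (1 - q / r) := hN hr.le self_mem_Ici (by positivity) hq_div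
      _ ≤ N r ^ (q / r) * 1 := mul_le_mul' le_rfl (rpow_le_one h0 (sub_nonneg.2 hq_div))
      _ = N r ^ (q / r) := mul_one _
  calc N q ^ (1 / q) ≤ (N r ^ (q / r)) ^ (1 / q) := rpow_le_rpow hNq (by positivity)
    _ = N r ^ (1 / r) := by rw [← rpow_mul]; congr 1; field_simp

theorem rpow_one_div_le_of_le_mul (hN : LogConvexOn (Ici 0) N) {p q r : ℝ} (hp : 0 < p)
    (hpq : p < q) (hqr : q < r) (hq : N q ≠ ⊤) {c : ℝ≥0∞}
    (hc : N r ^ (1 / r) ≤ c * N q ^ (1 / q)) :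
    N q ^ (1 / q) ≤ c ^ (r * (q - p) / (p * (r - q))) * N p ^ (1 / p) := by
  have hrp : r - p ≠ 0 := by linarith
  have hrq : r - q ≠ 0 := by linarith
  set θ := (r - q) / (r - p) with hθ
  have hθ0 : 0 < θ := div_pos (by linarith) (by linarith)
  have hθ1 : θ < 1 := (div_lt_one (by linarith)).2 (by linarith)
  have hθp : 0 < θ * p := mul_pos hθ0 hp
  have hθr : 0 ≤ (1 - θ) * r := mul_nonneg (sub_nonneg.2 hθ1.le) (by linarith)
  have hq_eq : θ * p + (1 - θ) * r = q := by
    rw [hθ]; field_simp; ring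
  have hκ : r * (q - p) / (p * (r - q)) * (θ * p) = (1 - θ) * r := by
    rw [hθ]; field_simp; ring
  have hroot : ∀ t ≠ 0, (N t ^ (1 / t)) ^ t = N t := fun t ht => by
    rw [← rpow_mul, one_div_mul_cancel ht, rpow_one]
  have hNr : N r ≤ (c * N q ^ (1 / q)) ^ r := by
    rw [← hroot r (by linarith)]; exact rpow_le_rpow hc (by linarith)
  have hNq := hroot q (by linarith)
  have hNp := hroot p hp.ne'
  generalize N q ^ (1 / q) = x at hNq hNr ⊢
  generalize N p ^ (1 / p) = y at hNp ⊢
  have key : x ^ (θ * p) * x ^ ((1 - θ) * r) ≤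
      (c ^ (r * (q - p) / (p * (r - q))) * y) ^ (θ * p) * x ^ ((1 - θ) * r) :=
    calc x ^ (θ * p) * x ^ ((1 - θ) * r) = N q := by
          rw [← rpow_add_of_nonneg _ _ hθp.le hθr, hq_eq, hNq]
      _ ≤ N p ^ θ * N r ^ (1 - θ) := hq_eq ▸ hN hp.le (show 0 ≤ r by linarith) hθ0.le hθ1.le
      _ ≤ (y ^ p) ^ θ * ((c * x) ^ r) ^ (1 - θ) := by
          rw [← hNp]; exact mul_le_mul' le_rfl (rpow_le_rpow hNr (sub_nonneg.2 hθ1.le))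
      _ = (c ^ (r * (q - p) / (p * (r - q))) * y) ^ (θ * p) * x ^ ((1 - θ) * r) := by
          rw [← rpow_mul, ← rpow_mul, mul_comm p, mul_comm r, mul_rpow_of_nonneg c x hθr,
            mul_rpow_of_nonneg _ y hθp.le, ← rpow_mul, hκ]
          ring
  rcases eq_or_ne x 0 with hx | hx
  · simp [hx]
  have hx_top : x ≠ ⊤ := by
    rintro rfl; rw [top_rpow_of_pos (by linarith)] at hNq; exact hq hNq.symm
  rw [ENNReal.mul_le_mul_iff_left (rpow_pos (pos_iff_ne_zero.2 hx) hx_top).ne'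
    (rpow_ne_top_of_nonneg hθr hx_top)] at key
  exact (rpow_le_rpow_iff hθp).1 key

end LogConvexOn

theorem lintegral_rpow_logConvexOn {α : Type*} [MeasurableSpace α] (ν : Measure α)
    {g : α → ℝ≥0∞} (hg : AEMeasurable g ν) : LogConvexOn (Ici 0) fun r => ∫⁻ x, g x ^ r ∂ν := by
  intro a ha b hb θ hθ hθ1
  calc ∫⁻ x, g x ^ (θ * a + (1 - θ) * b) ∂ν = ∫⁻ x, (g x ^ a) ^ θ * (g x ^ b) ^ (1 - θ) ∂ν := by
        refine lintegral_congr fun x => ?_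
        rw [← rpow_mul, ← rpow_mul, mul_comm a, mul_comm b,
          rpow_add_of_nonneg _ _ (mul_nonneg hθ ha) (mul_nonneg (sub_nonneg.2 hθ1) hb)]
    _ ≤ _ := lintegral_mul_norm_pow_le (hg.pow_const a) (hg.pow_const b) hθ (sub_nonneg.2 hθ1)
          (by ring)

variable {Y F : Type*} [MeasurableSpace Y]

theorem setLIntegral_mul_div_eq_lintegral (μ : Measure Y) {w g : Y → ℝ≥0∞} (hw : Measurable w)
    (hg : Measurable g) (B : Set Y) :
    (∫⁻ x in B, g x * w x ∂μ) / ∫⁻ x in B, w x ∂μ =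
      ∫⁻ x, g x ∂((∫⁻ x in B, w x ∂μ)⁻¹ • (μ.restrict B).withDensity w) := by
  rw [lintegral_smul_measure, lintegral_withDensity_eq_lintegral_mul _ hw hg, smul_eq_mul,
    ENNReal.div_eq_inv_mul]
  simp only [Pi.mul_apply, mul_comm (w _)]

def xNormPow (μ : Measure Y) (ℬ : Set (Set Y)) (Λ : F → Set Y → Y → ℝ≥0∞)
    (w : Y → ℝ≥0∞) (r : ℝ) (f : F) : ℝ≥0∞ :=
  ⨆ B ∈ ℬ, (∫⁻ x in B, Λ f B x ^ r * w x ∂μ) / ∫⁻ x in B, w x ∂μ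

variable (μ : Measure Y) (ℬ : Set (Set Y)) (Λ : F → Set Y → Y → ℝ≥0∞) (w : Y → ℝ≥0∞)

theorem xNormPow_zero_le_one (f : F) : xNormPow μ ℬ Λ w 0 f ≤ 1 :=
  iSup₂_le fun B _ => by simpa only [rpow_zero, one_mul] using ENNReal.div_self_le_one

theorem logConvexOn_xNormPow (hΛ : ∀ (f : F) (B : Set Y), Measurable (Λ f B))
    (hw : Measurable w) (f : F) : LogConvexOn (Ici 0) fun r => xNormPow μ ℬ Λ w r f := by
  have h : (fun r => xNormPow μ ℬ Λ w r f) = fun r => ⨆ B ∈ ℬ,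
      ∫⁻ x, Λ f B x ^ r ∂((∫⁻ x in B, w x ∂μ)⁻¹ • (μ.restrict B).withDensity w) :=
    funext fun r => iSup_congr fun B => iSup_congr fun _ =>
      setLIntegral_mul_div_eq_lintegral μ hw ((hΛ f B).pow_const r) B
  rw [h]
  exact .iSup fun B => .iSup fun _ => lintegral_rpow_logConvexOn _ (hΛ f B).aemeasurable

end JNW

theorem statement0_general
    {Y F : Type*} [MeasurableSpace Y] (μ : Measure Y)
    (ℬ : Set (Set Y))
    (Λ : F → Set Y → Y → ℝ≥0∞) (hΛ : ∀ (f : F) (B : Set Y), Measurable (Λ f B))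
    (w : Y → ℝ≥0∞) (hw : JNW.MemAinfty μ ℬ w)
    (q₀ p₀ : ℝ) (hq₀ : 0 < q₀) (hq₀' : q₀ ≤ 1) (hqp : q₀ < p₀)
    (hJN : JNW.JNprop μ ℬ Λ w (Set.Icc q₀ p₀)) :
    JNW.JNprop μ ℬ Λ w (Set.Ioc 0 p₀) := by
  obtain ⟨-, -, hw_meas, -⟩ := hw
  have hN := JNW.logConvexOn_xNormPow μ ℬ Λ w hΛ hw_meas
  have hN₀ := JNW.xNormPow_zero_le_one μ ℬ Λ w
  intro p hp q hq hpq
  rcases le_or_gt q₀ p with hq₀p | hpq₀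
  · exact hJN p ⟨hq₀p, hpq.le.trans hq.2⟩ q ⟨hq₀p.trans hpq.le, hq.2⟩ hpq
  obtain ⟨c, hc, hc_le⟩ := hJN q₀ ⟨le_rfl, hqp.le⟩ p₀ ⟨hqp.le, le_rfl⟩ hqp
  set κ := p₀ * (q₀ - p) / (p * (p₀ - q₀))
  refine ⟨c * c ^ κ, mul_lt_top hc (rpow_lt_top_of_nonneg ?_ hc.ne), fun f hf => ?_⟩
  · exact div_nonneg (mul_nonneg (hq₀.trans hqp).le (by linarith))
      (mul_nonneg hp.1.le (by linarith))
  have hf_q₀ : JNW.xNormPow μ ℬ Λ w q₀ f ≠ ⊤ := by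
    refine ((rpow_lt_top_iff_of_pos (one_div_pos.2 hq₀)).1 ?_).ne
    calc _ ≤ JNW.xNorm μ ℬ Λ w 1 f := (hN f).rpow_one_div_le (hN₀ f) hq₀ hq₀'
      _ < ⊤ := hf
  calc JNW.xNorm μ ℬ Λ w q f ≤ JNW.xNorm μ ℬ Λ w p₀ f :=
        (hN f).rpow_one_div_le (hN₀ f) (hp.1.trans hpq) hq.2
    _ ≤ c * JNW.xNorm μ ℬ Λ w q₀ f := hc_le f hf
    _ ≤ c * (c ^ κ * JNW.xNorm μ ℬ Λ w p f) :=
        mul_le_mul' le_rfl ((hN f).rpow_one_div_le_of_le_mul hp.1 hpq₀ hqp hf_q₀ (hc_le f hf))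
    _ = c * c ^ κ * JNW.xNorm μ ℬ Λ w p f := (mul_assoc _ _ _).symm

/-- **Lemma 3.1.** Fix `w ∈ A_∞(ℬ)`.  If there exist `0 < q₀ < p₀ < ∞` with `q₀ ≤ 1` such that
`X_w(ℬ,Λ)` satisfies the `p`-power John–Nirenberg property on the interval `[q₀, p₀]`, then
`X_w(ℬ,Λ)` also satisfies the `p`-power John–Nirenberg property on the interval `(0, p₀]`. -/
theorem statement0
    {Y F : Type*} [MeasurableSpace Y] (μ : Measure Y) [SigmaFinite μ]
    (ℬ : Set (Set Y)) (hmeas : ∀ B ∈ ℬ, MeasurableSet B)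
    (hℬ : ∀ B ∈ ℬ, 0 < μ B ∧ μ B < ⊤)
    (Λ : F → Set Y → Y → ℝ≥0∞) (hΛ : ∀ (f : F) (B : Set Y), Measurable (Λ f B))
    (w : Y → ℝ≥0∞) (hw : JNW.MemAinfty μ ℬ w)
    (q₀ p₀ : ℝ) (hq₀ : 0 < q₀) (hq₀' : q₀ ≤ 1) (hqp : q₀ < p₀)
    (hJN : JNW.JNprop μ ℬ Λ w (Set.Icc q₀ p₀)) :
    JNW.JNprop μ ℬ Λ w (Set.Ioc 0 p₀) :=
  statement0_general μ ℬ Λ hΛ w hw q₀ p₀ hq₀ hq₀' hqp hJN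
end
end

section
/- Suppose assumption A4 holds. If X(ℬ,Λ) satisfies the p-power John-Nirenberg property on [1,∞), then for every 1<p<∞, every t≥1, and every v∈A_p(ℬ) with [v]_{A_p}≤t, one has ‖f‖_{X_v} ≤ K(p,t)·c_{1,Δ(p,t)'}·‖f‖_X for all f∈X(ℬ,Λ); consequently Ψ_p(t) ≤ K(p,t)·c_{1,Δ(p,t)'}. -/
/-!
On each `B ∈ ℬ`, Hölder's inequality with exponents `δ'` and `δ = Δ(p,t)` bounds
`∫_B Λ(f,B) v` by `⟨Λ(f,B)^{δ'}⟩_B^{1/δ'} ⟨v^δ⟩_B^{1/δ} μ(B)`, and the first factor is at most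
`‖f‖_{X^{δ'}}`. Unless `v` vanishes on every `B` (and then `‖f‖_{X_v} = 0`), `[v]_{A_p} ≥ 1`, so
`δ ≤ Δ(p,[v]_{A_p})`; the power-mean inequality followed by the reverse Hölder inequality of A4
then bounds the second factor by `K(p,t) ⟨v⟩_B`. Hence `‖f‖_{X_v} ≤ K(p,t) ‖f‖_{X^{δ'}}`, and the
John–Nirenberg property gives `‖f‖_{X^{δ'}} ≤ c_{1,δ'} ‖f‖_X`.

Averages over `B` are integrals against the probability measure `μ[|B]`.
-/

open MeasureTheory ENNReal Set

noncomputable section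

namespace JNW

open ProbabilityTheory

variable {Y : Type*} [MeasurableSpace Y] {F : Type*} {μ : Measure Y} {ℬ : Set (Set Y)}
  {Λ : F → Set Y → Y → ℝ≥0∞} {B : Set Y} {v : Y → ℝ≥0∞}

lemma lavg_eq_lintegral_cond (g : Y → ℝ≥0∞) : lavg μ B g = ∫⁻ x, g x ∂μ[|B] := by
  rw [lavg, ProbabilityTheory.cond, lintegral_smul_measure, smul_eq_mul, div_eq_mul_inv,
    mul_comm]

lemma lavg_mul_measure (h0 : μ B ≠ 0) (htop : μ B ≠ ⊤) (g : Y → ℝ≥0∞) :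
    lavg μ B g * μ B = ∫⁻ x in B, g x ∂μ :=
  ENNReal.div_mul_cancel h0 htop

lemma lavg_ne_zero (htop : μ B ≠ ⊤) {g : Y → ℝ≥0∞} (hg : ∫⁻ x in B, g x ∂μ ≠ 0) :
    lavg μ B g ≠ 0 := by
  simp [lavg, hg, htop]

lemma lavg_ne_top (h0 : μ B ≠ 0) {g : Y → ℝ≥0∞} (hg : ∫⁻ x in B, g x ∂μ ≠ ⊤) :
    lavg μ B g ≠ ⊤ :=
  ENNReal.div_ne_top hg h0

lemma lavg_mul_le {p q : ℝ} (hpq : p.HolderConjugate q) {f g : Y → ℝ≥0∞}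
    (hf : Measurable f) (hg : Measurable g) :
    lavg μ B (fun x => f x * g x) ≤
      (lavg μ B fun x => f x ^ p) ^ (1 / p) * (lavg μ B fun x => g x ^ q) ^ (1 / q) := by
  simpa only [lavg_eq_lintegral_cond, Pi.mul_apply] using
    ENNReal.lintegral_mul_le_Lp_mul_Lq μ[|B] hpq hf.aemeasurable hg.aemeasurable

lemma rpow_lavg_rpow_le_rpow_lavg_rpow (h0 : μ B ≠ 0) (htop : μ B ≠ ⊤) {g : Y → ℝ≥0∞}
    (hg : Measurable g) {a b : ℝ} (ha : 0 < a) (hab : a ≤ b) :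
    (lavg μ B fun x => g x ^ a) ^ (1 / a) ≤ (lavg μ B fun x => g x ^ b) ^ (1 / b) := by
  have := cond_isProbabilityMeasure_of_finite h0 htop
  simpa only [lavg_eq_lintegral_cond, eLpNorm'_eq_lintegral_enorm, enorm_eq_self] using
    eLpNorm'_le_eLpNorm'_of_exponent_le ha hab μ[|B] hg.aestronglyMeasurable

lemma one_le_lintegral_mul_lintegral_rpow_neg {α : Type*} [MeasurableSpace α] {ν : Measure α}
    [IsProbabilityMeasure ν] {p q : ℝ} (hpq : p.HolderConjugate q) {u : α → ℝ≥0∞}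
    (hu : Measurable u) (h0 : ∫⁻ x, u x ∂ν ≠ 0) (htop : ∫⁻ x, u x ∂ν ≠ ⊤) :
    1 ≤ (∫⁻ x, u x ∂ν) * (∫⁻ x, u x ^ (-(q / p)) ∂ν) ^ (p / q) := by
  by_cases hzero : ν {x | u x = 0} = 0
  · have hne_zero : ∀ᵐ x ∂ν, u x ≠ 0 := measure_eq_zero_iff_ae_notMem.1 hzero
    have hne_top : ∀ᵐ x ∂ν, u x ≠ ⊤ := (ae_lt_top hu htop).mono fun x hx => hx.ne
    -- Hölder's inequality applied to `1 = u ^ (1/p) * u ^ (-1/p)`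
    have hHolder := ENNReal.lintegral_mul_le_Lp_mul_Lq ν hpq
      (hu.pow_const p⁻¹).aemeasurable (hu.pow_const (-p⁻¹)).aemeasurable
    have hone : ∫⁻ x, ((fun x => u x ^ p⁻¹) * fun x => u x ^ (-p⁻¹)) x ∂ν = 1 := by
      rw [← measure_univ (μ := ν), ← lintegral_one]
      refine lintegral_congr_ae ?_
      filter_upwards [hne_zero, hne_top] with x hx0 hxtop
      rw [Pi.mul_apply, ← ENNReal.rpow_add _ _ hx0 hxtop, add_neg_cancel, ENNReal.rpow_zero]
    have hpow : ∀ x, (u x ^ (-p⁻¹)) ^ q = u x ^ (-(q / p)) := fun x => by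
      rw [← ENNReal.rpow_mul]; ring_nf
    simp only [hone, ENNReal.rpow_inv_rpow hpq.ne_zero, hpow] at hHolder
    calc (1 : ℝ≥0∞) = 1 ^ p := (ENNReal.one_rpow p).symm
      _ ≤ ((∫⁻ x, u x ∂ν) ^ (1 / p) * (∫⁻ x, u x ^ (-(q / p)) ∂ν) ^ (1 / q)) ^ p :=
        ENNReal.rpow_le_rpow hHolder hpq.nonneg
      _ = (∫⁻ x, u x ∂ν) * (∫⁻ x, u x ^ (-(q / p)) ∂ν) ^ (p / q) := by
        rw [ENNReal.mul_rpow_of_nonneg _ _ hpq.nonneg, ← ENNReal.rpow_mul, ← ENNReal.rpow_mul,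
          one_div_mul_cancel hpq.ne_zero, ENNReal.rpow_one, one_div_mul_eq_div]
  · have hsneg : -(q / p) < 0 := neg_neg_of_pos (div_pos hpq.symm.pos hpq.pos)
    have hinf : ∫⁻ x, u x ^ (-(q / p)) ∂ν = ⊤ := by
      refine top_le_iff.1 (le_trans ?_ (setLIntegral_le_lintegral {x | u x = 0} _))
      rw [setLIntegral_congr_fun (g := fun _ => ⊤)
        (show MeasurableSet {x | u x = 0} from hu (measurableSet_singleton 0))
        (fun x (hx : u x = 0) => by rw [hx, ENNReal.zero_rpow_of_neg hsneg]),
        setLIntegral_const, ENNReal.top_mul hzero]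
    rw [hinf, ENNReal.top_rpow_of_pos (div_pos hpq.pos hpq.symm.pos), ENNReal.mul_top h0]
    exact le_top

lemma one_le_apConst {p : ℝ} (hp : 1 < p) (hv : Measurable v) (hB : B ∈ ℬ)
    (h0 : μ B ≠ 0) (htop : μ B ≠ ⊤) (hv0 : lavg μ B v ≠ 0) (hvtop : lavg μ B v ≠ ⊤) :
    1 ≤ apConst μ ℬ p v := by
  have := cond_isProbabilityMeasure_of_finite h0 htop
  rw [lavg_eq_lintegral_cond] at hv0 hvtop
  refine le_trans ?_ (le_biSup (fun B => lavg μ B v *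
    (lavg μ B fun x => v x ^ (-(conj p / p))) ^ (p / conj p)) hB)
  simp only [lavg_eq_lintegral_cond]
  exact one_le_lintegral_mul_lintegral_rpow_neg (Real.HolderConjugate.conjExponent hp) hv hv0
    hvtop

lemma rpow_lavg_rpow_le_rhConst_mul_lavg {δ : ℝ} (hB : B ∈ ℬ) (hv0 : lavg μ B v ≠ 0)
    (hvtop : lavg μ B v ≠ ⊤) :
    (lavg μ B fun x => v x ^ δ) ^ (1 / δ) ≤ rhConst μ ℬ δ v * lavg μ B v :=
  (ENNReal.div_le_iff hv0 hvtop).1 <| le_biSup (fun B =>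
    (lavg μ B fun x => v x ^ δ) ^ (1 / δ) / lavg μ B v) hB

lemma rpow_lavg_rpow_le_xNorm {q : ℝ} (hq : 0 < q) (hB : B ∈ ℬ) (f : F) :
    (lavg μ B fun x => Λ f B x ^ q) ^ (1 / q) ≤ xNorm μ ℬ Λ wone q f := by
  refine ENNReal.rpow_le_rpow ?_ (one_div_pos.2 hq).le
  refine le_trans (le_of_eq ?_) (le_biSup (fun B => (∫⁻ x in B, Λ f B x ^ q * wone x ∂μ) /
    ∫⁻ x in B, wone x ∂μ) hB)
  simp only [lavg, wone, mul_one, setLIntegral_one]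

lemma xNorm_one_le_of_forall_setLIntegral_le {f : F} {C : ℝ≥0∞}
    (h : ∀ B ∈ ℬ, ∫⁻ x in B, Λ f B x * v x ∂μ ≤ C * ∫⁻ x in B, v x ∂μ) :
    xNorm μ ℬ Λ v 1 f ≤ C := by
  simp only [xNorm, div_one, ENNReal.rpow_one]
  exact iSup₂_le fun B hB => ENNReal.div_le_of_le_mul (h B hB)

lemma setLIntegral_mul_eq_zero_of_setLIntegral_eq_zero (hv : Measurable v) (g : Y → ℝ≥0∞)
    (h : ∫⁻ x in B, v x ∂μ = 0) : ∫⁻ x in B, g x * v x ∂μ = 0 := by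
  rw [← lintegral_zero (μ := μ.restrict B)]
  refine lintegral_congr_ae ?_
  filter_upwards [(lintegral_eq_zero_iff hv).1 h] with x hx
  simp [hx]

lemma xNorm_one_le_rhConst_mul_xNorm_conj (hℬ : ∀ B ∈ ℬ, 0 < μ B ∧ μ B < ⊤)
    (hΛ : ∀ (f : F) (B : Set Y), Measurable (Λ f B)) (hv : Measurable v)
    (hvloc : ∀ B ∈ ℬ, ∫⁻ x in B, v x ∂μ < ⊤) {δ δ₀ : ℝ} (hδ : 1 < δ) (hδδ₀ : δ ≤ δ₀)
    (f : F) :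
    xNorm μ ℬ Λ v 1 f ≤ rhConst μ ℬ δ₀ v * xNorm μ ℬ Λ wone (conj δ) f := by
  have hconj : (conj δ).HolderConjugate δ := (Real.HolderConjugate.conjExponent hδ).symm
  refine xNorm_one_le_of_forall_setLIntegral_le fun B hB => ?_
  obtain ⟨hB0, hBtop⟩ := hℬ B hB
  by_cases hvB : ∫⁻ x in B, v x ∂μ = 0
  · rw [setLIntegral_mul_eq_zero_of_setLIntegral_eq_zero hv _ hvB]
    exact zero_le
  have hv0 := lavg_ne_zero hBtop.ne hvB
  have hvtop := lavg_ne_top hB0.ne' (hvloc B hB).ne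
  calc ∫⁻ x in B, Λ f B x * v x ∂μ
      = lavg μ B (fun x => Λ f B x * v x) * μ B :=
        (lavg_mul_measure hB0.ne' hBtop.ne _).symm
    _ ≤ (lavg μ B fun x => Λ f B x ^ conj δ) ^ (1 / conj δ) *
          (lavg μ B fun x => v x ^ δ) ^ (1 / δ) * μ B := by
        gcongr
        exact lavg_mul_le hconj (hΛ f B) hv
    _ ≤ xNorm μ ℬ Λ wone (conj δ) f * (rhConst μ ℬ δ₀ v * lavg μ B v) * μ B := by
        gcongr
        · exact rpow_lavg_rpow_le_xNorm hconj.pos hB f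
        · calc (lavg μ B fun x => v x ^ δ) ^ (1 / δ)
              ≤ (lavg μ B fun x => v x ^ δ₀) ^ (1 / δ₀) :=
                rpow_lavg_rpow_le_rpow_lavg_rpow hB0.ne' hBtop.ne hv (by linarith) hδδ₀
            _ ≤ rhConst μ ℬ δ₀ v * lavg μ B v :=
                rpow_lavg_rpow_le_rhConst_mul_lavg hB hv0 hvtop
    _ = rhConst μ ℬ δ₀ v * xNorm μ ℬ Λ wone (conj δ) f * ∫⁻ x in B, v x ∂μ := by
        rw [← lavg_mul_measure hB0.ne' hBtop.ne]
        ring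

lemma xNorm_one_le_mul_xNorm_conj_of_memAp (hℬ : ∀ B ∈ ℬ, 0 < μ B ∧ μ B < ⊤)
    (hΛ : ∀ (f : F) (B : Set Y), Measurable (Λ f B)) {p : ℝ} (hp : 1 < p)
    {Δ : ℝ≥0∞ → ℝ} {K : ℝ≥0∞ → ℝ≥0∞} {t : ℝ≥0∞} (hΔt : 1 < Δ t)
    (hΔmono : ∀ s, 1 ≤ s → s ≤ t → Δ t ≤ Δ s) (hKmono : ∀ s, 1 ≤ s → s ≤ t → K s ≤ K t)
    (hv : MemAp μ ℬ p v) (hvt : apConst μ ℬ p v ≤ t)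
    (hRH : rhConst μ ℬ (Δ (apConst μ ℬ p v)) v ≤ K (apConst μ ℬ p v)) (f : F) :
    xNorm μ ℬ Λ v 1 f ≤ K t * xNorm μ ℬ Λ wone (conj (Δ t)) f := by
  by_cases hdeg : ∀ B ∈ ℬ, ∫⁻ x in B, v x ∂μ = 0
  · refine (xNorm_one_le_of_forall_setLIntegral_le (C := 0) fun B hB => ?_).trans zero_le
    rw [setLIntegral_mul_eq_zero_of_setLIntegral_eq_zero hv.1 _ (hdeg B hB)]
    exact zero_le
  push Not at hdeg
  obtain ⟨B, hB, hvB⟩ := hdeg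
  obtain ⟨hB0, hBtop⟩ := hℬ B hB
  have h1 : 1 ≤ apConst μ ℬ p v := one_le_apConst hp hv.1 hB hB0.ne' hBtop.ne
    (lavg_ne_zero hBtop.ne hvB) (lavg_ne_top hB0.ne' (hv.2.1 B hB).ne)
  calc xNorm μ ℬ Λ v 1 f
      ≤ rhConst μ ℬ (Δ (apConst μ ℬ p v)) v * xNorm μ ℬ Λ wone (conj (Δ t)) f :=
        xNorm_one_le_rhConst_mul_xNorm_conj hℬ hΛ hv.1 hv.2.1 hΔt (hΔmono _ h1 hvt) f
    _ ≤ K t * xNorm μ ℬ Λ wone (conj (Δ t)) f := by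
        gcongr
        exact hRH.trans (hKmono _ h1 hvt)

lemma le_sInf_mul_of_forall_le_mul {S : Set ℝ≥0∞} {a b : ℝ≥0∞} (hS : S.Nonempty)
    (hb : b ≠ ⊤) (h : ∀ C ∈ S, a ≤ C * b) : a ≤ sInf S * b := by
  by_cases hb0 : b = 0
  · obtain ⟨C, hC⟩ := hS
    simpa [hb0] using h C hC
  exact (ENNReal.div_le_iff hb0 hb).1 <|
    le_sInf fun C hC => ENNReal.div_le_of_le_mul (h C hC)

lemma xNorm_le_cConst_mul {w : Y → ℝ≥0∞} {p q : ℝ} {C : ℝ≥0∞}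
    (hC : ∀ f : F, xNorm μ ℬ Λ w 1 f < ⊤ → xNorm μ ℬ Λ w q f ≤ C * xNorm μ ℬ Λ w p f)
    {f : F} (hf : xNorm μ ℬ Λ w 1 f < ⊤) (hfp : xNorm μ ℬ Λ w p f ≠ ⊤) :
    xNorm μ ℬ Λ w q f ≤ cConst μ ℬ Λ w p q * xNorm μ ℬ Λ w p f :=
  le_sInf_mul_of_forall_le_mul ⟨C, hC⟩ hfp fun _ hC' => hC' f hf

lemma psi_le_of_forall_xNorm_le {p : ℝ} {t C : ℝ≥0∞}
    (h : ∀ v : Y → ℝ≥0∞, MemAp μ ℬ p v → apConst μ ℬ p v ≤ t →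
      ∀ f : F, xNorm μ ℬ Λ wone 1 f < ⊤ → xNorm μ ℬ Λ v 1 f ≤ C * xNorm μ ℬ Λ wone 1 f) :
    psi μ ℬ Λ p t ≤ C :=
  iSup₂_le fun v hv => sInf_le fun f hf => h v hv.1 hv.2 f hf

end JNW

theorem statement4_general
    {Y F : Type*} [MeasurableSpace Y] (μ : Measure Y)
    (ℬ : Set (Set Y))
    (hℬ : ∀ B ∈ ℬ, 0 < μ B ∧ μ B < ⊤)
    (Λ : F → Set Y → Y → ℝ≥0∞) (hΛ : ∀ (f : F) (B : Set Y), Measurable (Λ f B))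
    (Δ : ℝ → ℝ≥0∞ → ℝ) (K : ℝ → ℝ≥0∞ → ℝ≥0∞)
    (hΔrange : ∀ (p : ℝ) (t : ℝ≥0∞), 1 < p → 1 ≤ t → 1 < Δ p t)
    (hΔmono : ∀ (p₁ p₂ : ℝ) (t₁ t₂ : ℝ≥0∞), 1 < p₁ → p₁ ≤ p₂ → 1 ≤ t₁ → t₁ ≤ t₂ →
      Δ p₂ t₂ ≤ Δ p₁ t₁)
    (hKmono : ∀ (p₁ p₂ : ℝ) (t₁ t₂ : ℝ≥0∞), 1 < p₁ → p₁ ≤ p₂ → 1 ≤ t₁ → t₁ ≤ t₂ →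
      K p₁ t₁ ≤ K p₂ t₂)
    (hA4 : ∀ p : ℝ, 1 < p → ∀ u : Y → ℝ≥0∞, JNW.MemAp μ ℬ p u →
      JNW.MemRH μ ℬ (Δ p (JNW.apConst μ ℬ p u)) u ∧
      JNW.rhConst μ ℬ (Δ p (JNW.apConst μ ℬ p u)) u ≤ K p (JNW.apConst μ ℬ p u))
    (hJN : JNW.JNprop μ ℬ Λ JNW.wone (Set.Ici 1)) :
    ∀ (p : ℝ) (t : ℝ≥0∞), 1 < p → 1 ≤ t →
      (∀ v : Y → ℝ≥0∞, JNW.MemAp μ ℬ p v → JNW.apConst μ ℬ p v ≤ t →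
        ∀ f : F, JNW.xNorm μ ℬ Λ JNW.wone 1 f < ⊤ →
          JNW.xNorm μ ℬ Λ v 1 f ≤
            K p t * JNW.cConst μ ℬ Λ JNW.wone 1 (JNW.conj (Δ p t)) *
              JNW.xNorm μ ℬ Λ JNW.wone 1 f) ∧
      JNW.psi μ ℬ Λ p t ≤ K p t * JNW.cConst μ ℬ Λ JNW.wone 1 (JNW.conj (Δ p t)) := by
  intro p t hp ht
  have hδ : 1 < Δ p t := hΔrange p t hp ht
  have hq : 1 < JNW.conj (Δ p t) := (Real.HolderConjugate.conjExponent hδ).symm.lt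
  obtain ⟨C, -, hC⟩ := hJN 1 Set.self_mem_Ici _ hq.le hq
  refine ⟨?weighted, JNW.psi_le_of_forall_xNorm_le ?weighted⟩
  intro v hv hvt f hf
  calc JNW.xNorm μ ℬ Λ v 1 f
      ≤ K p t * JNW.xNorm μ ℬ Λ JNW.wone (JNW.conj (Δ p t)) f :=
        JNW.xNorm_one_le_mul_xNorm_conj_of_memAp hℬ hΛ hp hδ
          (fun s hs hst => hΔmono p p s t hp le_rfl hs hst)
          (fun s hs hst => hKmono p p s t hp le_rfl hs hst) hv hvt (hA4 p hp v hv).2 f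
    _ ≤ K p t * JNW.cConst μ ℬ Λ JNW.wone 1 (JNW.conj (Δ p t)) * JNW.xNorm μ ℬ Λ JNW.wone 1 f := by
        rw [mul_assoc]
        gcongr
        exact JNW.xNorm_le_cConst_mul hC hf hf.ne

/-- **Proposition 3.4.** Suppose assumption A4 holds: there are `Δ : (1,∞)² → (1,∞)`,
non-increasing in each variable, and `K : (1,∞)² → (1,∞)`, non-decreasing in each variable,
such that every `u ∈ A_p(ℬ)` lies in `RH_{Δ(p,[u]_{A_p})}(ℬ)` with
`[u]_{RH_{Δ(p,[u]_{A_p})}} ≤ K(p,[u]_{A_p})`.  If `X(ℬ,Λ)` satisfies the `p`-power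
John–Nirenberg property on `[1,∞)`, then for every `1 < p < ∞`, every `t ≥ 1` and every
`v ∈ A_p(ℬ)` with `[v]_{A_p} ≤ t`, one has `‖f‖_{X_v} ≤ K(p,t) c_{1,Δ(p,t)'} ‖f‖_X` for all
`f ∈ X(ℬ,Λ)`; consequently `Ψ_p(t) ≤ K(p,t) c_{1,Δ(p,t)'}`. -/
theorem statement4
    {Y F : Type*} [MeasurableSpace Y] (μ : Measure Y) [SigmaFinite μ]
    (ℬ : Set (Set Y)) (hmeas : ∀ B ∈ ℬ, MeasurableSet B)
    (hℬ : ∀ B ∈ ℬ, 0 < μ B ∧ μ B < ⊤)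
    (Λ : F → Set Y → Y → ℝ≥0∞) (hΛ : ∀ (f : F) (B : Set Y), Measurable (Λ f B))
    (Δ : ℝ → ℝ≥0∞ → ℝ) (K : ℝ → ℝ≥0∞ → ℝ≥0∞)
    (hΔrange : ∀ (p : ℝ) (t : ℝ≥0∞), 1 < p → 1 ≤ t → 1 < Δ p t)
    (hKrange : ∀ (p : ℝ) (t : ℝ≥0∞), 1 < p → 1 ≤ t → 1 < K p t)
    (hΔmono : ∀ (p₁ p₂ : ℝ) (t₁ t₂ : ℝ≥0∞), 1 < p₁ → p₁ ≤ p₂ → 1 ≤ t₁ → t₁ ≤ t₂ →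
      Δ p₂ t₂ ≤ Δ p₁ t₁)
    (hKmono : ∀ (p₁ p₂ : ℝ) (t₁ t₂ : ℝ≥0∞), 1 < p₁ → p₁ ≤ p₂ → 1 ≤ t₁ → t₁ ≤ t₂ →
      K p₁ t₁ ≤ K p₂ t₂)
    (hA4 : ∀ p : ℝ, 1 < p → ∀ u : Y → ℝ≥0∞, JNW.MemAp μ ℬ p u →
      JNW.MemRH μ ℬ (Δ p (JNW.apConst μ ℬ p u)) u ∧
      JNW.rhConst μ ℬ (Δ p (JNW.apConst μ ℬ p u)) u ≤ K p (JNW.apConst μ ℬ p u))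
    (hJN : JNW.JNprop μ ℬ Λ JNW.wone (Set.Ici 1)) :
    ∀ (p : ℝ) (t : ℝ≥0∞), 1 < p → 1 ≤ t →
      (∀ v : Y → ℝ≥0∞, JNW.MemAp μ ℬ p v → JNW.apConst μ ℬ p v ≤ t →
        ∀ f : F, JNW.xNorm μ ℬ Λ JNW.wone 1 f < ⊤ →
          JNW.xNorm μ ℬ Λ v 1 f ≤
            K p t * JNW.cConst μ ℬ Λ JNW.wone 1 (JNW.conj (Δ p t)) *
              JNW.xNorm μ ℬ Λ JNW.wone 1 f) ∧
      JNW.psi μ ℬ Λ p t ≤ K p t * JNW.cConst μ ℬ Λ JNW.wone 1 (JNW.conj (Δ p t)) :=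
  statement4_general μ ℬ hℬ Λ hΛ Δ K hΔrange hΔmono hKmono hA4 hJN
end
end

section
/- If u∈A_p(ℬ)∩RH_δ(ℬ) for some 1<p,δ<∞, then u^δ∈A_q(ℬ) with [u^δ]_{A_q} ≤ [u]_{RH_δ}^δ·[u]_{A_p}^δ, where q = 1+δ(p−1). -/
/-!
Write `q - 1 = δ (p - 1)`. The dual weight of `u ^ δ` in the `A_q` characteristic is
`(u ^ δ) ^ (-1/(q-1)) = u ^ (-1/(p-1))`, the dual weight of `u` in the `A_p` characteristic, and
its average is raised to the power `q - 1 = δ (p - 1)`. The reverse Hölder inequality bounds the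
average of `u ^ δ` by `[u]_{RH_δ}^δ (avg u)^δ`, so on every `B` the `A_q` product of `u ^ δ` is at
most `[u]_{RH_δ}^δ` times the `δ`-th power of the `A_p` product of `u`.
-/

open MeasureTheory ENNReal Set

noncomputable section

namespace JNW

variable {Y : Type*} [MeasurableSpace Y] {μ : Measure Y} {ℬ : Set (Set Y)}

lemma conj_div_self {p : ℝ} (hp : p ≠ 0) : conj p / p = (p - 1)⁻¹ := by
  unfold conj
  field_simp

lemma self_div_conj {p : ℝ} (hp : p ≠ 0) : p / conj p = p - 1 := by
  unfold conj
  field_simp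

lemma apConst_eq_iSup {p : ℝ} (hp : p ≠ 0) (w : Y → ℝ≥0∞) :
    apConst μ ℬ p w =
      ⨆ B ∈ ℬ, lavg μ B w * (lavg μ B fun x => w x ^ (-(p - 1)⁻¹)) ^ (p - 1) := by
  simp only [apConst, conj_div_self hp, self_div_conj hp]

lemma le_apConst {p : ℝ} (hp : p ≠ 0) (w : Y → ℝ≥0∞) {B : Set Y} (hB : B ∈ ℬ) :
    lavg μ B w * (lavg μ B fun x => w x ^ (-(p - 1)⁻¹)) ^ (p - 1) ≤ apConst μ ℬ p w := by
  rw [apConst_eq_iSup hp]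
  exact le_iSup₂ (f := fun B _ => lavg μ B w * (lavg μ B fun x => w x ^ (-(p - 1)⁻¹)) ^ (p - 1))
    B hB

lemma lavg_lt_top {B : Set Y} {g : Y → ℝ≥0∞} (hg : ∫⁻ x in B, g x ∂μ < ⊤) (hB : μ B ≠ 0) :
    lavg μ B g < ⊤ :=
  ENNReal.div_lt_top hg.ne hB

lemma setLIntegral_lt_top_of_lavg_lt_top {B : Set Y} {g : Y → ℝ≥0∞} (hg : lavg μ B g < ⊤)
    (hB₀ : μ B ≠ 0) (hB : μ B ≠ ⊤) : ∫⁻ x in B, g x ∂μ < ⊤ := by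
  have h := ENNReal.mul_lt_top hg hB.lt_top
  rwa [lavg, ENNReal.div_mul_cancel hB₀ hB] at h

lemma lavg_rpow_le_rhConst {δ : ℝ} (hδ : 0 < δ) {w : Y → ℝ≥0∞}
    (hrh : rhConst μ ℬ δ w ≠ ⊤) {B : Set Y} (hB : B ∈ ℬ) (hw : lavg μ B w ≠ ⊤) :
    lavg μ B (fun x => w x ^ δ) ≤ rhConst μ ℬ δ w ^ δ * lavg μ B w ^ δ := by
  have hdiv : (lavg μ B fun x => w x ^ δ) ^ (1 / δ) / lavg μ B w ≤ rhConst μ ℬ δ w :=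
    le_iSup₂ (f := fun B _ => (lavg μ B fun x => w x ^ δ) ^ (1 / δ) / lavg μ B w) B hB
  rwa [one_div, ENNReal.div_le_iff_le_mul (Or.inr hrh) (Or.inl hw), ENNReal.rpow_inv_le_iff hδ,
    ENNReal.mul_rpow_of_nonneg _ _ hδ.le] at hdiv

theorem apConst_rpow_le {p δ : ℝ} (hp : 1 < p) (hδ : 0 < δ) {w : Y → ℝ≥0∞}
    (hw : ∀ B ∈ ℬ, lavg μ B w ≠ ⊤) (hrh : rhConst μ ℬ δ w ≠ ⊤) :
    apConst μ ℬ (1 + δ * (p - 1)) (fun x => w x ^ δ) ≤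
      rhConst μ ℬ δ w ^ δ * apConst μ ℬ p w ^ δ := by
  have hq : 1 + δ * (p - 1) ≠ 0 := by positivity
  rw [apConst_eq_iSup hq, add_sub_cancel_left]
  refine iSup₂_le fun B hB => ?_
  set b := lavg μ B fun x => w x ^ (-(p - 1)⁻¹)
  have hdual : (lavg μ B fun x => (w x ^ δ) ^ (-(δ * (p - 1))⁻¹)) = b := by
    have hexp : δ * -(δ * (p - 1))⁻¹ = -(p - 1)⁻¹ := by field_simp
    simp only [← ENNReal.rpow_mul, hexp, b]
  calc lavg μ B (fun x => w x ^ δ) * (lavg μ B fun x => (w x ^ δ) ^ (-(δ * (p - 1))⁻¹))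
        ^ (δ * (p - 1))
      = lavg μ B (fun x => w x ^ δ) * (b ^ (p - 1)) ^ δ := by
        rw [hdual, mul_comm δ, ENNReal.rpow_mul]
    _ ≤ (rhConst μ ℬ δ w ^ δ * lavg μ B w ^ δ) * (b ^ (p - 1)) ^ δ := by
        gcongr
        exact lavg_rpow_le_rhConst hδ hrh hB (hw B hB)
    _ = rhConst μ ℬ δ w ^ δ * (lavg μ B w * b ^ (p - 1)) ^ δ := by
        rw [ENNReal.mul_rpow_of_nonneg _ _ hδ.le, mul_assoc]
    _ ≤ rhConst μ ℬ δ w ^ δ * apConst μ ℬ p w ^ δ := by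
        gcongr
        exact le_apConst (by positivity) w hB

end JNW

theorem statement5_general
    {Y : Type*} [MeasurableSpace Y] (μ : Measure Y)
    (ℬ : Set (Set Y))
    (hℬ : ∀ B ∈ ℬ, 0 < μ B ∧ μ B < ⊤)
    (p δ : ℝ) (hp : 1 < p) (hδ : 1 < δ)
    (u : Y → ℝ≥0∞) (hu : JNW.MemAp μ ℬ p u) (hrh : JNW.MemRH μ ℬ δ u) :
    JNW.MemAp μ ℬ (1 + δ * (p - 1)) (fun x => u x ^ δ) ∧
    JNW.apConst μ ℬ (1 + δ * (p - 1)) (fun x => u x ^ δ) ≤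
      JNW.rhConst μ ℬ δ u ^ δ * JNW.apConst μ ℬ p u ^ δ := by
  obtain ⟨hu_meas, hu_int, hu_Ap⟩ := hu
  have hδ₀ : 0 < δ := by linarith
  have hu_avg : ∀ B ∈ ℬ, JNW.lavg μ B u ≠ ⊤ := fun B hB =>
    (JNW.lavg_lt_top (hu_int B hB) (hℬ B hB).1.ne').ne
  have hbound := JNW.apConst_rpow_le hp hδ₀ hu_avg hrh.2.2.ne
  refine ⟨⟨hu_meas.pow_const δ, fun B hB => ?_, hbound.trans_lt ?_⟩, hbound⟩
  · refine JNW.setLIntegral_lt_top_of_lavg_lt_top ?_ (hℬ B hB).1.ne' (hℬ B hB).2.ne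
    refine (JNW.lavg_rpow_le_rhConst hδ₀ hrh.2.2.ne hB (hu_avg B hB)).trans_lt ?_
    exact ENNReal.mul_lt_top (ENNReal.rpow_lt_top_of_nonneg hδ₀.le hrh.2.2.ne)
      (ENNReal.rpow_lt_top_of_nonneg hδ₀.le (hu_avg B hB))
  · exact ENNReal.mul_lt_top (ENNReal.rpow_lt_top_of_nonneg hδ₀.le hrh.2.2.ne)
      (ENNReal.rpow_lt_top_of_nonneg hδ₀.le hu_Ap.ne)

/-- **Lemma 4.1.** If `u ∈ A_p(ℬ) ∩ RH_δ(ℬ)` for some `1 < p, δ < ∞`, then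
`u^δ ∈ A_q(ℬ)` with `[u^δ]_{A_q} ≤ [u]_{RH_δ}^δ [u]_{A_p}^δ`, where `q = 1 + δ(p-1)`. -/
theorem statement5
    {Y : Type*} [MeasurableSpace Y] (μ : Measure Y) [SigmaFinite μ]
    (ℬ : Set (Set Y)) (hmeas : ∀ B ∈ ℬ, MeasurableSet B)
    (hℬ : ∀ B ∈ ℬ, 0 < μ B ∧ μ B < ⊤)
    (p δ : ℝ) (hp : 1 < p) (hδ : 1 < δ)
    (u : Y → ℝ≥0∞) (hu : JNW.MemAp μ ℬ p u) (hrh : JNW.MemRH μ ℬ δ u) :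
    JNW.MemAp μ ℬ (1 + δ * (p - 1)) (fun x => u x ^ δ) ∧
    JNW.apConst μ ℬ (1 + δ * (p - 1)) (fun x => u x ^ δ) ≤
      JNW.rhConst μ ℬ δ u ^ δ * JNW.apConst μ ℬ p u ^ δ :=
  statement5_general μ ℬ hℬ p δ hp hδ u hu hrh
end
end
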